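/- Let F be a field, h ∈ F[x] nonzero, and u a monic irreducible factor of h in F[x]. Then the two-sided ideal u·A_h is a prime ideal of A_h and the quotient A_h/u·A_h is isomorphic to the commutative polynomial ring (F[x]/uF[x])[ŷ] over the field F[x]/uF[x]; in particular A_h/u·A_h is a domain. -/
import Mathlib


open Polynomial FreeAlgebra

/-- The defining relation of `A_h`: `y * x = x * y + h(x)`. -/
inductive ahRel (F : Type) [Field F] (h : F[X]) :
    FreeAlgebra F (Fin 2) → FreeAlgebra F (Fin 2) → Prop
  | rel : ahRel F h (ι F 1 * ι F 0) (ι F 0 * ι F 1 + aeval (ι F 0) h)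

/-- The algebra `A_h` generated by `x, y` with `yx - xy = h(x)`. -/
noncomputable abbrev AW (F : Type) [Field F] (h : F[X]) := RingQuot (ahRel F h)

/-- The generator `x` of `A_h`. -/
noncomputable def aX (F : Type) [Field F] (h : F[X]) : AW F h :=
  RingQuot.mkAlgHom F (ahRel F h) (ι F 0)

/-- The generator `y` of `A_h`. -/
noncomputable def aY (F : Type) [Field F] (h : F[X]) : AW F h :=
  RingQuot.mkAlgHom F (ahRel F h) (ι F 1)

section AuxStmt16

variable (F : Type) [Field F] (h : F[X])

lemma yx_rel : aY F h * aX F h = aX F h * aY F h + aeval (aX F h) h := by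
  have := RingQuot.mkAlgHom_rel F (ahRel.rel (F := F) (h := h))
  rw [map_mul, map_add, map_mul, ← aeval_algHom_apply] at this
  exact this

lemma comm_lemma (p : F[X]) :
    aY F h * aeval (aX F h) p
      = aeval (aX F h) p * aY F h + aeval (aX F h) (h * derivative p) := by
  induction p using Polynomial.induction_on with
  | C a => simp [Algebra.commutes]
  | add p q hp hq =>
      rw [map_add, mul_add, hp, hq, derivative_add, mul_add, map_add, add_mul]
      abel
  | monomial n a ih =>
      have e1 : (C a * X ^ (n + 1) : F[X]) = C a * X ^ n * X := by ring
      have e2 : h * derivative (C a * X ^ n * X)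
          = (C a * X ^ n) * h + (h * derivative (C a * X ^ n)) * X := by
        rw [derivative_mul, derivative_X, mul_one]
        ring
      rw [e1, e2, aeval_mul, aeval_X, map_add,
        show (aeval (aX F h)) (C a * X ^ n * h)
          = aeval (aX F h) (C a * X ^ n) * aeval (aX F h) h from map_mul _ _ _,
        show (aeval (aX F h)) (h * derivative (C a * X ^ n) * X)
          = aeval (aX F h) (h * derivative (C a * X ^ n)) * aeval (aX F h) X from map_mul _ _ _,
        aeval_X, ← mul_assoc, ih, add_mul, mul_assoc, yx_rel, mul_add, ← mul_assoc]
      abel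

noncomputable def Phi : Polynomial F[X] → AW F h :=
  fun P => Polynomial.eval₂ ((Polynomial.aeval (aX F h)).toRingHom) (aY F h) P

lemma Phi_add (P Q : Polynomial F[X]) : Phi F h (P + Q) = Phi F h P + Phi F h Q :=
  eval₂_add _ _

lemma Phi_monomial (n : ℕ) (p : F[X]) :
    Phi F h (monomial n p) = aeval (aX F h) p * aY F h ^ n :=
  eval₂_monomial _ _

lemma Phi_C_mul (p : F[X]) (Q : Polynomial F[X]) :
    Phi F h (C p * Q) = aeval (aX F h) p * Phi F h Q := by
  rw [← smul_eq_C_mul]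
  exact eval₂_smul _ _ _

lemma y_mul_Phi (Q : Polynomial F[X]) :
    ∃ Q', aY F h * Phi F h Q = Phi F h Q' := by
  induction Q using Polynomial.induction_on' with
  | add P Q hP hQ =>
      obtain ⟨P', hP'⟩ := hP
      obtain ⟨Q', hQ'⟩ := hQ
      exact ⟨P' + Q', by rw [Phi_add, mul_add, hP', hQ', Phi_add]⟩
  | monomial n p =>
      refine ⟨monomial (n + 1) p + monomial n (h * derivative p), ?_⟩
      rw [Phi_add, Phi_monomial, Phi_monomial, Phi_monomial, ← mul_assoc, comm_lemma,
        add_mul, mul_assoc, ← pow_succ']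

lemma ypow_mul_Phi (n : ℕ) (Q : Polynomial F[X]) :
    ∃ Q', aY F h ^ n * Phi F h Q = Phi F h Q' := by
  induction n generalizing Q with
  | zero => exact ⟨Q, by simp⟩
  | succ n ih =>
      obtain ⟨Q', hQ'⟩ := y_mul_Phi F h Q
      obtain ⟨Q'', hQ''⟩ := ih Q'
      exact ⟨Q'', by rw [pow_succ, mul_assoc, hQ', hQ'']⟩

lemma Phi_mul_Phi (P Q : Polynomial F[X]) :
    ∃ R, Phi F h P * Phi F h Q = Phi F h R := by
  induction P using Polynomial.induction_on' with
  | add P1 P2 h1 h2 =>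
      obtain ⟨R1, hR1⟩ := h1
      obtain ⟨R2, hR2⟩ := h2
      exact ⟨R1 + R2, by rw [Phi_add, add_mul, hR1, hR2, Phi_add]⟩
  | monomial n p =>
      obtain ⟨Q', hQ'⟩ := ypow_mul_Phi F h n Q
      exact ⟨C p * Q', by rw [Phi_monomial, mul_assoc, hQ', Phi_C_mul]⟩

lemma Phi_surj (a : AW F h) : ∃ P, Phi F h P = a := by
  obtain ⟨z, rfl⟩ := RingQuot.mkAlgHom_surjective F (ahRel F h) a
  induction z using FreeAlgebra.induction with
  | grade0 r =>
      refine ⟨C (C r), ?_⟩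
      unfold Phi
      rw [eval₂_C]
      simp [AlgHom.commutes]
  | grade1 i =>
      fin_cases i
      · exact ⟨C X, by unfold Phi; rw [eval₂_C]; simp [aX]⟩
      · exact ⟨X, by unfold Phi; rw [eval₂_X]; rfl⟩
  | mul a b ha hb =>
      obtain ⟨P, hP⟩ := ha
      obtain ⟨Q, hQ⟩ := hb
      obtain ⟨R, hR⟩ := Phi_mul_Phi F h P Q
      exact ⟨R, by rw [← hR, hP, hQ, map_mul]⟩
  | add a b ha hb =>
      obtain ⟨P, hP⟩ := ha
      obtain ⟨Q, hQ⟩ := hb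
      exact ⟨P + Q, by rw [Phi_add, hP, hQ, map_add]⟩

end AuxStmt16

/-- For a monic irreducible factor `u` of `h`, the ideal `u·A_h` is (completely) prime and
`A_h/u·A_h ≅ (F[x]/(u))[ŷ]`, a polynomial ring over the field `F[x]/(u)`; in particular
the quotient is a domain. This is expressed by a surjective `F`-algebra map
`φ : A_h → (F[x]/(u))[Y]` with kernel `u·A_h`, sending `x` to the class of `x` and `ŷ`
to `Y`. -/
theorem stmt16 (F : Type) [Field F] (h u : F[X]) (hh : h ≠ 0) (hu : u.Monic)
    (hirr : Irreducible u) (hdvd : u ∣ h) :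
    ∃ φ : AW F h →ₐ[F] Polynomial (F[X] ⧸ Ideal.span {u}),
      Function.Surjective φ ∧
      (∀ a : AW F h, φ a = 0 ↔ ∃ b, a = aeval (aX F h) u * b) ∧
      φ (aX F h) = C (Ideal.Quotient.mk (Ideal.span {u}) X) ∧
      φ (aY F h) = X ∧
      IsDomain (Polynomial (F[X] ⧸ Ideal.span {u})) ∧
      (∀ a b : AW F h, (∃ c, a * b = aeval (aX F h) u * c) →
          (∃ c, a = aeval (aX F h) u * c) ∨ (∃ c, b = aeval (aX F h) u * c)) := by
  have hu0 : u ≠ 0 := hu.ne_zero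
  have hmku : Ideal.Quotient.mk (Ideal.span {u}) u = 0 := by
    rw [Ideal.Quotient.eq_zero_iff_mem]
    exact Ideal.mem_span_singleton_self u
  have hmkh : Ideal.Quotient.mk (Ideal.span {u}) h = 0 := by
    rw [Ideal.Quotient.eq_zero_iff_mem, Ideal.mem_span_singleton]
    exact hdvd
  haveI hprime : (Ideal.span {u}).IsPrime :=
    (Ideal.span_singleton_prime hu0).mpr hirr.prime
  haveI hdomq : IsDomain (F[X] ⧸ Ideal.span {u}) := Ideal.Quotient.isDomain _
  set R := Polynomial (F[X] ⧸ Ideal.span {u}) with hR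
  let v : Fin 2 → R := ![C (Ideal.Quotient.mk (Ideal.span {u}) X), X]
  let φ0 : FreeAlgebra F (Fin 2) →ₐ[F] R := FreeAlgebra.lift F v
  have hφ00 : φ0 (ι F 0) = C (Ideal.Quotient.mk (Ideal.span {u}) X) := by
    simp [φ0, v]
  have hφ01 : φ0 (ι F 1) = (X : R) := by
    simp [φ0, v]
  have hCeq :
      (Polynomial.aeval (C (Ideal.Quotient.mk (Ideal.span {u}) X) : R) : F[X] →ₐ[F] R)
        = (Polynomial.CAlgHom).comp (Ideal.Quotient.mkₐ F (Ideal.span {u})) := by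
    apply Polynomial.algHom_ext
    simp [CAlgHom]
  have hCp : ∀ p : F[X],
      Polynomial.aeval (C (Ideal.Quotient.mk (Ideal.span {u}) X) : R) p
        = C (Ideal.Quotient.mk (Ideal.span {u}) p) := by
    intro p
    have := DFunLike.congr_fun hCeq p
    simpa [CAlgHom] using this
  have w : ∀ ⦃a b : FreeAlgebra F (Fin 2)⦄, ahRel F h a b → φ0 a = φ0 b := by
    rintro _ _ ⟨⟩
    rw [map_mul, map_add, map_mul, hφ00, hφ01, ← aeval_algHom_apply, hφ00, hCp, hmkh]
    simp
    exact X_mul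
  let φ : AW F h →ₐ[F] R := RingQuot.liftAlgHom F ⟨φ0, w⟩
  have hφx : φ (aX F h) = C (Ideal.Quotient.mk (Ideal.span {u}) X) := by
    rw [aX, RingQuot.liftAlgHom_mkAlgHom_apply]
    exact hφ00
  have hφy : φ (aY F h) = (X : R) := by
    rw [aY, RingQuot.liftAlgHom_mkAlgHom_apply]
    exact hφ01
  have hφE : ∀ p : F[X], φ (aeval (aX F h) p) = C (Ideal.Quotient.mk (Ideal.span {u}) p) := by
    intro p
    rw [← aeval_algHom_apply, hφx, hCp]
  have hφΦ : ∀ P : Polynomial F[X],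
      φ (Phi F h P) = P.map (Ideal.Quotient.mk (Ideal.span {u})) := by
    intro P
    induction P using Polynomial.induction_on' with
    | add P Q hP hQ => rw [Phi_add, map_add, hP, hQ, Polynomial.map_add]
    | monomial n p =>
        rw [Phi_monomial, map_mul, map_pow, hφE, hφy, Polynomial.map_monomial,
          ← C_mul_X_pow_eq_monomial]
  have hker : ∀ a : AW F h, φ a = 0 ↔ ∃ b, a = aeval (aX F h) u * b := by
    intro a
    constructor
    · intro ha
      obtain ⟨P, rfl⟩ := Phi_surj F h a
      rw [hφΦ] at ha
      have hcoeff : ∀ i, u ∣ P.coeff i := by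
        intro i
        have h2 := congrArg (fun q => Polynomial.coeff q i) ha
        simp only [Polynomial.coeff_map, Polynomial.coeff_zero] at h2
        rwa [Ideal.Quotient.eq_zero_iff_mem, Ideal.mem_span_singleton] at h2
      obtain ⟨Q, hQ⟩ := (Polynomial.C_dvd_iff_dvd_coeff u P).mpr hcoeff
      exact ⟨Phi F h Q, by rw [hQ, Phi_C_mul]⟩
    · rintro ⟨b, rfl⟩
      rw [map_mul, hφE, hmku, map_zero, zero_mul]
  have hsurj : Function.Surjective φ := by
    intro q
    obtain ⟨P, hP⟩ := Polynomial.map_surjective _ Ideal.Quotient.mk_surjective q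
    exact ⟨Phi F h P, by rw [hφΦ, hP]⟩
  refine ⟨φ, hsurj, hker, hφx, hφy, inferInstance, ?_⟩
  rintro a b ⟨c, hc⟩
  have h0 : φ a * φ b = 0 := by
    rw [← map_mul]
    exact (hker _).mpr ⟨c, hc⟩
  rcases mul_eq_zero.mp h0 with h1 | h1
  · exact Or.inl ((hker a).mp h1)
  · exact Or.inr ((hker b).mp h1)
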